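/- arXiv:1212.2948 — 2 statements merged into one kernel-verified Lean document; each statement's English description precedes it below -/
import Mathlib

section
/- Let q be a positive integer with D | q, let a be an integer with gcd(a, q) = 1, and let a* be an integer with a·a* ≡ 1 (mod q). Then for every complex number w with Re w > 0 one has f(a/q + i w) = conj(χ(a))·(−i q w)^{−k}·f(−a*/q + i/(q² w)). -/
/-!
The matrix `γ = (a₀, -b; q, a*)` with `a₀ a* + b q = 1` lies in `Γ₀(D)`, and it sends
`-a*/q + u` to `a₀/q - 1/(q² u)`. Taking `u = i/(q² w)` the image is `a₀/q + i w`, the automorphy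
factor `q u + a*` becomes `q u = (-i q w)⁻¹`, and `χ(a*) = conj χ(a₀)` because `a*` is an inverse of
`a₀` modulo `D` and `χ` is unitary.
-/

open Complex Filter MeasureTheory ComplexConjugate

noncomputable section

/-- Normalized coefficients `r n = a n * n^((1-k)/2)`. -/
def rcoef (k : ℕ) (a : ℕ → ℂ) (n : ℕ) : ℂ :=
  a n * (((n : ℝ) ^ ((1 - (k : ℝ)) / 2)) : ℝ)

/-- A nonzero holomorphic cusp form of integral weight `k ≥ 1` for `Γ₀(D)` with
character `χ` mod `D`, which is a normalized eigenfunction of all Hecke operators,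
together with the Deligne bound `|r n| ≤ τ n` for its normalized coefficients. -/
structure CuspFormData where
  k : ℕ
  D : ℕ
  hk : 1 ≤ k
  hD : 1 ≤ D
  χ : DirichletCharacter ℂ D
  f : ℂ → ℂ
  a : ℕ → ℂ
  f_nonzero : ∃ z : ℂ, 0 < z.im ∧ f z ≠ 0
  f_hol : DifferentiableOn ℂ f {z : ℂ | 0 < z.im}
  f_exp : ∀ z : ℂ, 0 < z.im →
    HasSum (fun n : ℕ => a (n + 1) * Complex.exp (2 * Real.pi * I * ((n + 1 : ℕ) : ℂ) * z)) (f z)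
  f_modular : ∀ A B C d : ℤ, A * d - B * C = 1 → (D : ℤ) ∣ C → ∀ z : ℂ, 0 < z.im →
    f (((A : ℂ) * z + B) / ((C : ℂ) * z + d)) = χ (d : ZMod D) * ((C : ℂ) * z + d) ^ k * f z
  f_cusp : ∀ A B C d : ℤ, A * d - B * C = 1 →
    Tendsto (fun y : ℝ => (((C : ℂ) * (y : ℂ) * I + (d : ℂ)) ^ k)⁻¹ *
      f (((A : ℂ) * (y : ℂ) * I + (B : ℂ)) / ((C : ℂ) * (y : ℂ) * I + (d : ℂ)))) atTop (nhds 0)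
  hecke_eigen : ∀ n : ℕ, 1 ≤ n → ∀ z : ℂ, 0 < z.im →
    (1 / (n : ℂ)) * ∑ d ∈ n.divisors, χ ((n / d : ℕ) : ZMod D) * ((n / d : ℕ) : ℂ) ^ k *
      ∑ b ∈ Finset.range d, f ((((n / d : ℕ) : ℂ) * z + (b : ℂ)) / (d : ℂ)) = a n * f z
  a_one : a 1 = 1
  ramanujan : ∀ n : ℕ, 1 ≤ n → ‖rcoef k a n‖ ≤ (n.divisors.card : ℝ)

lemma MulChar.apply_eq_conj_of_mul_eq_one {R : Type*} [CommRing R] [Finite Rˣ]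
    (χ : MulChar R ℂ) {x y : R} (h : x * y = 1) : χ y = conj (χ x) := by
  have hinv : Ring.inverse x = y := by
    simpa [h] using Ring.inverse_mul_cancel_left x y (.of_mul_eq_one y h)
  rw [← RCLike.star_def, star_apply', inv_apply, hinv]

namespace Complex

lemma I_div_eq_inv_neg_I_mul (z : ℂ) : I / z = (-I * z)⁻¹ := by
  rw [mul_inv, inv_neg, inv_I, neg_neg, div_eq_mul_inv]

lemma im_I_div_pos {z : ℂ} (hz : 0 < z.re) : 0 < (I / z).im := by
  have him : (I / z).im = z.re / normSq z := by simp [div_eq_mul_inv, inv_re]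
  rw [him]
  exact div_pos hz (normSq_pos.mpr fun h => by simp [h] at hz)

lemma im_add_I_div_pos {x z : ℂ} (hx : x.im = 0) (hz : 0 < z.re) : 0 < (x + I / z).im := by
  simpa [hx] using im_I_div_pos hz

end Complex

section Moebius

variable {K : Type*} [Field K] {a b c d : K}

lemma moebius_denom_eq (hc : c ≠ 0) (u : K) : c * (-d / c + u) + d = c * u := by
  field_simp
  ring

lemma moebius_apply_of_det (hdet : a * d - b * c = 1) (hc : c ≠ 0) {u : K} (hu : u ≠ 0) :
    (a * (-d / c + u) + b) / (c * (-d / c + u) + d) = a / c - 1 / (c ^ 2 * u) := by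
  field_simp
  linear_combination -c * u * hdet

end Moebius

theorem CuspFormData.f_div_sub_one_div (F : CuspFormData) {a b c d : ℤ} (hdet : a * d - b * c = 1)
    (hDc : (F.D : ℤ) ∣ c) (hc : c ≠ 0) {u : ℂ} (hu : 0 < (-(d : ℂ) / c + u).im) :
    F.f (a / c - 1 / ((c : ℂ) ^ 2 * u)) = F.χ d * (c * u) ^ F.k * F.f (-(d : ℂ) / c + u) := by
  have hc' : (c : ℂ) ≠ 0 := Int.cast_ne_zero.mpr hc
  have hu0 : u ≠ 0 := by
    rintro rfl
    simp [← Int.cast_neg, div_im] at hu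
  rw [← moebius_apply_of_det (a := (a : ℂ)) (b := b) (c := c) (d := d)
      (by exact_mod_cast hdet) hc' hu0,
    F.f_modular a b c d hdet hDc _ hu, moebius_denom_eq hc']

theorem modular_relation_at_cusp_general (F : CuspFormData) (q : ℕ) (hq : 0 < q) (hDq : F.D ∣ q)
    (a₀ astar : ℤ)
    (hstar : a₀ * astar ≡ 1 [ZMOD (q : ℤ)]) :
    ∀ w : ℂ, 0 < w.re →
      F.f ((a₀ : ℂ) / (q : ℂ) + I * w) =
        conj (F.χ ((a₀ : ℤ) : ZMod F.D)) * (-I * (q : ℂ) * w) ^ (-(F.k : ℤ)) *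
          F.f (-(astar : ℂ) / (q : ℂ) + I / ((q : ℂ) ^ 2 * w)) := by
  intro w hw
  obtain ⟨b, hb⟩ := hstar.dvd
  have hq0 : (q : ℂ) ≠ 0 := Nat.cast_ne_zero.mpr hq.ne'
  have hw0 : w ≠ 0 := by rintro rfl; simp at hw
  have hDq' : (F.D : ℤ) ∣ q := Int.natCast_dvd_natCast.mpr hDq
  have hu : 0 < (-((astar : ℤ) : ℂ) / ((q : ℤ) : ℂ) + I / ((q : ℂ) ^ 2 * w)).im := by
    refine im_add_I_div_pos (by simp [div_im]) ?_
    rw [← ofReal_natCast, ← ofReal_pow, re_ofReal_mul]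
    positivity
  have hrel := F.f_div_sub_one_div (a := a₀) (b := -b) (by linarith) hDq'
    (by exact_mod_cast hq.ne') hu
  have harg : (a₀ : ℂ) / q - 1 / ((q : ℂ) ^ 2 * (I / ((q : ℂ) ^ 2 * w))) = a₀ / q + I * w := by
    field_simp
    linear_combination -(q : ℂ) * w * I_sq
  have hfactor : ((q : ℂ) * (I / ((q : ℂ) ^ 2 * w))) ^ F.k = (-I * q * w) ^ (-(F.k : ℤ)) := by
    rw [zpow_neg, zpow_natCast, ← inv_pow, mul_assoc, ← I_div_eq_inv_neg_I_mul]
    congr 1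
    field_simp
  have hχ : F.χ astar = conj (F.χ a₀) := by
    refine F.χ.apply_eq_conj_of_mul_eq_one ?_
    exact_mod_cast (ZMod.intCast_eq_intCast_iff _ 1 _).mpr (hstar.of_dvd hDq')
  push_cast at hrel
  rw [← harg, hrel, hfactor, hχ]

/-- relation (9). For `D ∣ q`, `(a, q) = 1`, `a a* ≡ 1 (mod q)` and
`Re w > 0`: `f(a/q + iw) = conj(χ(a)) (-iqw)^{-k} f(-a*/q + i/(q²w))`. -/
theorem modular_relation_at_cusp (F : CuspFormData) (q : ℕ) (hq : 0 < q) (hDq : F.D ∣ q)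
    (a₀ astar : ℤ) (ha : Int.gcd a₀ (q : ℤ) = 1)
    (hstar : a₀ * astar ≡ 1 [ZMOD (q : ℤ)]) :
    ∀ w : ℂ, 0 < w.re →
      F.f ((a₀ : ℂ) / (q : ℂ) + I * w) =
        conj (F.χ ((a₀ : ℤ) : ZMod F.D)) * (-I * (q : ℂ) * w) ^ (-(F.k : ℤ)) *
          F.f (-(astar : ℂ) / (q : ℂ) + I / ((q : ℂ) ^ 2 * w)) :=
  modular_relation_at_cusp_general F q hq hDq a₀ astar hstar
end
end

section
/- For every positive integer m all of whose prime factors exceed 256, the function s ↦ K(m, s) is analytic in the half-plane Re s ≥ 1/2 and satisfies |K(m, s)| ≤ τ₆(m) there, where τ₆(m) = ∑_{n₁n₂n₃n₄n₅n₆ = m} 1 is the 6-fold divisor function. -/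
/-!
Each factor of `K(m, s)` at `p ^ α ∥ m` is a quotient of two series in `p^{-s}` whose
coefficients are `O(4^j)` by the bound `|r(p^j)| ≤ j + 1`. For `p > 256` and `Re s > 1/3` we have
`4 p^{-Re s} < 2/3`, so both series converge locally uniformly and are analytic; for `Re s ≥ 1/2`
even `4 p^{-Re s} ≤ 1/4`, so the denominator (constant term `|r(1)|² = 1`) lies within `1/3`
of `1` and the numerator is at most `4/3 (α + 1)`: the factor is at most `2 (α + 1)`.
Finally `∏ 2 (α + 1) ≤ d(m)² ≤ τ₆(m)`, the last step via the injection
`(a, b) ↦ (gcd a b, a / gcd a b, b / gcd a b, m / lcm a b, 1, 1)` on pairs of divisors.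
-/

open Complex Filter MeasureTheory ComplexConjugate

noncomputable section

/-- The multiplicative factor
`K(m,s) = ∏_{p ∣ m} (∑_j |r(p^j)|² p^{-js})⁻¹ ∏_{p^α ∥ m} (∑_j conj(r(p^{α+j})) r(p^j) p^{-js})`. -/
def Kfun (r : ℕ → ℂ) (m : ℕ) (s : ℂ) : ℂ :=
  (∏ p ∈ m.primeFactors,
      (∑' j : ℕ, ((‖r (p ^ j)‖ ^ 2 : ℝ) : ℂ) / (p : ℂ) ^ ((j : ℂ) * s))⁻¹) *
  ∏ p ∈ m.primeFactors,
      ∑' j : ℕ, conj (r (p ^ (m.factorization p + j))) * r (p ^ j) / (p : ℂ) ^ ((j : ℂ) * s)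

/-- `K̄(m,s) = conj (K(m, conj s))`. -/
def Kbar (r : ℕ → ℂ) (m : ℕ) (s : ℂ) : ℂ := conj (Kfun r m (conj s))

/-- The 6-fold divisor function `τ₆(m) = #{(n₁,…,n₆) : n₁⋯n₆ = m}`. -/
def tau6 (m : ℕ) : ℕ := Nat.card {t : Fin 6 → ℕ // ∏ i, t i = m}


section EulerFactor

def eulerFactor (p : ℕ) (c : ℕ → ℂ) (s : ℂ) : ℂ :=
  ∑' j : ℕ, c j / (p : ℂ) ^ ((j : ℂ) * s)

variable {p : ℕ} {c : ℕ → ℂ} {C b q : ℝ} {s : ℂ}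

lemma norm_natCast_cpow_natCast_mul (hp : 0 < p) (j : ℕ) (s : ℂ) :
    ‖(p : ℂ) ^ ((j : ℂ) * s)‖ = ((p : ℝ) ^ s.re) ^ j := by
  rw [norm_natCast_cpow_of_pos hp, ← Real.rpow_natCast, ← Real.rpow_mul (Nat.cast_nonneg _)]
  simp [mul_comm]

lemma norm_div_natCast_cpow_le (hp : 0 < p) (hc : ∀ j, ‖c j‖ ≤ C * b ^ j) (hb : 0 ≤ b)
    (hbq : b ≤ q * (p : ℝ) ^ s.re) (j : ℕ) :
    ‖c j / (p : ℂ) ^ ((j : ℂ) * s)‖ ≤ C * q ^ j := by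
  have hC : 0 ≤ C := by simpa using (norm_nonneg _).trans (hc 0)
  have hx : 0 < (p : ℝ) ^ s.re := Real.rpow_pos_of_pos (Nat.cast_pos.mpr hp) _
  rw [norm_div, norm_natCast_cpow_natCast_mul hp, div_le_iff₀ (pow_pos hx j)]
  calc ‖c j‖ ≤ C * b ^ j := hc j
    _ ≤ C * (q * (p : ℝ) ^ s.re) ^ j := by gcongr
    _ = C * q ^ j * ((p : ℝ) ^ s.re) ^ j := by ring

lemma nonneg_of_le_mul_rpow (hp : 0 < p) (hb : 0 ≤ b) (hbq : b ≤ q * (p : ℝ) ^ s.re) :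
    0 ≤ q :=
  nonneg_of_mul_nonneg_left (hb.trans hbq) (Real.rpow_pos_of_pos (Nat.cast_pos.mpr hp) _)

lemma norm_eulerFactor_le (hp : 0 < p) (hc : ∀ j, ‖c j‖ ≤ C * b ^ j) (hb : 0 ≤ b)
    (hq : q < 1) (hbq : b ≤ q * (p : ℝ) ^ s.re) :
    ‖eulerFactor p c s‖ ≤ C / (1 - q) := by
  have hgeom := (hasSum_geometric_of_lt_one (nonneg_of_le_mul_rpow hp hb hbq) hq).mul_left C
  exact (tsum_of_norm_bounded hgeom (norm_div_natCast_cpow_le hp hc hb hbq)).trans_eq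
    (div_eq_mul_inv _ _).symm

lemma norm_eulerFactor_sub_one_le (hp : 0 < p) (hc : ∀ j, ‖c j‖ ≤ b ^ j) (hc0 : c 0 = 1)
    (hb : 0 ≤ b) (hq : q < 1) (hbq : b ≤ q * (p : ℝ) ^ s.re) :
    ‖eulerFactor p c s - 1‖ ≤ q / (1 - q) := by
  have hc' : ∀ j, ‖c j‖ ≤ 1 * b ^ j := by simpa using hc
  have hterm := norm_div_natCast_cpow_le hp hc' hb hbq
  have hgeom := (hasSum_geometric_of_lt_one (nonneg_of_le_mul_rpow hp hb hbq) hq).mul_left q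
  have hsummable : Summable fun j : ℕ => c j / (p : ℂ) ^ ((j : ℂ) * s) :=
    .of_norm_bounded ((summable_geometric_of_lt_one
      (nonneg_of_le_mul_rpow hp hb hbq) hq).mul_left 1) hterm
  rw [eulerFactor, hsummable.tsum_eq_zero_add]
  simp only [hc0, Nat.cast_zero, zero_mul, Complex.cpow_zero, div_one, add_sub_cancel_left]
  exact (tsum_of_norm_bounded hgeom fun j => (hterm (j + 1)).trans_eq (by ring)).trans_eq
    (div_eq_mul_inv _ _).symm

lemma analyticAt_eulerFactor (hp : 1 ≤ p) (hc : ∀ j, ‖c j‖ ≤ C * b ^ j) (hb : 0 ≤ b)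
    (hq : q < 1) {σ : ℝ} (hbq : b ≤ q * (p : ℝ) ^ σ) (hs : σ < s.re) :
    AnalyticAt ℂ (eulerFactor p c) s := by
  have hp0 : (p : ℂ) ≠ 0 := by exact_mod_cast (show p ≠ 0 by omega)
  have hq0 : 0 ≤ q := nonneg_of_le_mul_rpow (s := σ) hp hb hbq
  have hU : IsOpen {z : ℂ | σ < z.re} := isOpen_lt continuous_const Complex.continuous_re
  refine DifferentiableOn.analyticAt (s := {z : ℂ | σ < z.re}) ?_ (hU.mem_nhds hs)
  refine differentiableOn_tsum_of_summable_norm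
    ((summable_geometric_of_lt_one hq0 hq).mul_left C) (fun j => ?_) hU fun j z hz => ?_
  · exact (differentiableOn_const _).div
      ((differentiable_const _ |>.mul differentiable_id).const_cpow (.inl hp0)).differentiableOn
      fun z _ => by simp [hp0]
  · refine norm_div_natCast_cpow_le hp hc hb (hbq.trans ?_) j
    gcongr
    · exact_mod_cast hp
    · exact hz.le

end EulerFactor

lemma le_rpow_of_pow_le {a x σ : ℝ} {n : ℕ} (ha : 0 ≤ a) (hn : n ≠ 0) (hx : 1 ≤ x)
    (hax : a ^ n ≤ x) (hσ : (n : ℝ)⁻¹ ≤ σ) : a ≤ x ^ σ :=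
  ((Real.le_rpow_inv_iff_of_pos ha (by linarith) (by positivity)).2
    (by rwa [Real.rpow_natCast])).trans (Real.rpow_le_rpow_of_exponent_le hx hσ)

lemma four_le_quarter_mul_rpow {p : ℕ} (hp : 256 ≤ p) {s : ℂ} (hs : 1 / 2 ≤ s.re) :
    (4 : ℝ) ≤ 1 / 4 * (p : ℝ) ^ s.re := by
  have : (16 : ℝ) ≤ (p : ℝ) ^ s.re :=
    le_rpow_of_pow_le (n := 2) (by norm_num) (by norm_num) (by exact_mod_cast (by omega : 1 ≤ p))
      (by norm_num; exact_mod_cast hp) (by norm_num; linarith)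
  linarith

lemma four_le_two_thirds_mul_rpow_third {p : ℕ} (hp : 256 ≤ p) :
    (4 : ℝ) ≤ 2 / 3 * (p : ℝ) ^ (1 / 3 : ℝ) := by
  have : (6 : ℝ) ≤ (p : ℝ) ^ (1 / 3 : ℝ) :=
    le_rpow_of_pow_le (n := 3) (by norm_num) (by norm_num) (by exact_mod_cast (by omega : 1 ≤ p))
      (by norm_num; exact_mod_cast (by omega : 216 ≤ p)) (by norm_num)
  linarith

lemma ne_zero_of_norm_sub_one_lt {𝕜 : Type*} [NormedDivisionRing 𝕜] {a : 𝕜}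
    (h : ‖a - 1‖ < 1) : a ≠ 0 := by
  rintro rfl
  simp at h

lemma norm_inv_le_of_norm_sub_one_le {𝕜 : Type*} [NormedDivisionRing 𝕜] {a : 𝕜} {ε : ℝ}
    (h : ‖a - 1‖ ≤ ε) (hε : ε < 1) : ‖a⁻¹‖ ≤ (1 - ε)⁻¹ := by
  have hlow : 1 - ε ≤ ‖a‖ := by
    have := norm_sub_norm_le (1 : 𝕜) a
    rw [norm_sub_rev, norm_one] at this
    linarith
  rw [norm_inv]
  exact inv_anti₀ (by linarith) hlow

section LocalFactor

def sqNormCoeff (r : ℕ → ℂ) (p : ℕ) (j : ℕ) : ℂ := ((‖r (p ^ j)‖ ^ 2 : ℝ) : ℂ)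

def shiftedCoeff (r : ℕ → ℂ) (p α : ℕ) (j : ℕ) : ℂ := conj (r (p ^ (α + j))) * r (p ^ j)

def localFactor (r : ℕ → ℂ) (p α : ℕ) (s : ℂ) : ℂ :=
  (eulerFactor p (sqNormCoeff r p) s)⁻¹ * eulerFactor p (shiftedCoeff r p α) s

lemma Kfun_eq_prod_localFactor (r : ℕ → ℂ) (m : ℕ) (s : ℂ) :
    Kfun r m s = ∏ p ∈ m.primeFactors, localFactor r p (m.factorization p) s :=
  (Finset.prod_mul_distrib).symm

variable {r : ℕ → ℂ} {p : ℕ}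

lemma norm_prime_pow_le_two_pow (hr : ∀ j : ℕ, ‖r (p ^ j)‖ ≤ j + 1) (j : ℕ) :
    ‖r (p ^ j)‖ ≤ 2 ^ j :=
  (hr j).trans (by exact_mod_cast Nat.lt_two_pow_self)

lemma norm_sqNormCoeff_le (hr : ∀ j : ℕ, ‖r (p ^ j)‖ ≤ j + 1) (j : ℕ) :
    ‖sqNormCoeff r p j‖ ≤ 4 ^ j := by
  rw [sqNormCoeff, Complex.norm_real, Real.norm_of_nonneg (by positivity),
    show (4 : ℝ) ^ j = (2 ^ j) ^ 2 by rw [← pow_mul, mul_comm, pow_mul]; norm_num]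
  gcongr
  exact norm_prime_pow_le_two_pow hr j

lemma norm_shiftedCoeff_le (hr : ∀ j : ℕ, ‖r (p ^ j)‖ ≤ j + 1) (α j : ℕ) :
    ‖shiftedCoeff r p α j‖ ≤ (α + 1) * 4 ^ j := by
  have h1 := hr (α + j)
  have h2 := hr j
  have h3 : ((j : ℝ) + 1) ≤ 2 ^ j := by exact_mod_cast Nat.lt_two_pow_self
  push_cast at h1
  rw [shiftedCoeff, norm_mul, Complex.norm_conj,
    show (4 : ℝ) ^ j = 2 ^ j * 2 ^ j by rw [← mul_pow]; norm_num]
  calc ‖r (p ^ (α + j))‖ * ‖r (p ^ j)‖ ≤ (α + j + 1) * (j + 1) := by gcongr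
    _ ≤ ((α + 1) * (j + 1)) * (j + 1) := by gcongr; nlinarith
    _ ≤ ((α + 1) * 2 ^ j) * 2 ^ j := by gcongr
    _ = (α + 1) * (2 ^ j * 2 ^ j) := by ring

lemma norm_eulerFactor_sqNormCoeff_sub_one_le (hp : 256 ≤ p)
    (hr : ∀ j : ℕ, ‖r (p ^ j)‖ ≤ j + 1) (hr1 : r 1 = 1) {s : ℂ} (hs : 1 / 2 ≤ s.re) :
    ‖eulerFactor p (sqNormCoeff r p) s - 1‖ ≤ 1 / 3 := by
  have h := norm_eulerFactor_sub_one_le (by omega) (norm_sqNormCoeff_le hr)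
    (by simp [sqNormCoeff, hr1]) (by norm_num) (by norm_num : (1 / 4 : ℝ) < 1)
    (four_le_quarter_mul_rpow hp hs)
  exact h.trans_eq (by norm_num)

lemma analyticAt_localFactor (hp : 256 ≤ p) (hr : ∀ j : ℕ, ‖r (p ^ j)‖ ≤ j + 1)
    (hr1 : r 1 = 1) (α : ℕ) {s : ℂ} (hs : 1 / 2 ≤ s.re) :
    AnalyticAt ℂ (localFactor r p α) s := by
  have hbq := four_le_two_thirds_mul_rpow_third hp
  have hσ : (1 / 3 : ℝ) < s.re := by linarith
  have hsq : AnalyticAt ℂ (eulerFactor p (sqNormCoeff r p)) s :=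
    analyticAt_eulerFactor (by omega)
      (fun j => (norm_sqNormCoeff_le hr j).trans_eq (one_mul _).symm) (by norm_num) (by norm_num)
      hbq hσ
  have hshift : AnalyticAt ℂ (eulerFactor p (shiftedCoeff r p α)) s :=
    analyticAt_eulerFactor (by omega) (norm_shiftedCoeff_le hr α) (by norm_num) (by norm_num)
      hbq hσ
  exact (hsq.inv (ne_zero_of_norm_sub_one_lt
    ((norm_eulerFactor_sqNormCoeff_sub_one_le hp hr hr1 hs).trans_lt (by norm_num)))).mul hshift

lemma norm_localFactor_le (hp : 256 ≤ p) (hr : ∀ j : ℕ, ‖r (p ^ j)‖ ≤ j + 1)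
    (hr1 : r 1 = 1) (α : ℕ) {s : ℂ} (hs : 1 / 2 ≤ s.re) :
    ‖localFactor r p α s‖ ≤ 2 * ((α : ℝ) + 1) := by
  have hinv := norm_inv_le_of_norm_sub_one_le
    (norm_eulerFactor_sqNormCoeff_sub_one_le hp hr hr1 hs) (by norm_num)
  have hshift := norm_eulerFactor_le (by omega) (norm_shiftedCoeff_le hr α) (by norm_num)
    (by norm_num : (1 / 4 : ℝ) < 1) (four_le_quarter_mul_rpow hp hs)
  rw [localFactor, norm_mul]
  calc _ ≤ (1 - 1 / 3 : ℝ)⁻¹ * ((α + 1) / (1 - 1 / 4)) := by gcongr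
    _ = 2 * (α + 1) := by ring

end LocalFactor

lemma prod_two_mul_succ_le_card_divisors_sq {m : ℕ} (hm : m ≠ 0) :
    ∏ p ∈ m.primeFactors, 2 * (m.factorization p + 1) ≤ m.divisors.card ^ 2 := by
  rw [Nat.card_divisors hm, sq, Finset.prod_mul_distrib]
  gcongr with p hp
  have := (Nat.prime_of_mem_primeFactors hp).factorization_pos_of_dvd hm
    (Nat.dvd_of_mem_primeFactors hp)
  omega

lemma tau6_eq_card_finMulAntidiag {m : ℕ} (hm : m ≠ 0) :
    tau6 m = (Nat.finMulAntidiag 6 m).card := by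
  rw [tau6, ← Nat.card_eq_finsetCard]
  congr
  ext t
  simp [Nat.mem_finMulAntidiag, hm]

lemma gcd_mul_div_gcd_mul_div_gcd_mul_div_lcm {a b m : ℕ} (ha : a ∣ m) (hb : b ∣ m) :
    a.gcd b * (a / a.gcd b) * (b / a.gcd b) * (m / a.lcm b) = m := by
  rw [Nat.mul_div_cancel' (Nat.gcd_dvd_left a b), ← Nat.mul_div_assoc _ (Nat.gcd_dvd_right a b)]
  exact Nat.mul_div_cancel' (Nat.lcm_dvd ha hb)

lemma card_divisors_sq_le_tau6 {m : ℕ} (hm : m ≠ 0) : m.divisors.card ^ 2 ≤ tau6 m := by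
  rw [tau6_eq_card_finMulAntidiag hm, sq, ← Finset.card_product]
  refine Finset.card_le_card_of_injOn (fun d : ℕ × ℕ => ![d.1.gcd d.2, d.1 / d.1.gcd d.2,
    d.2 / d.1.gcd d.2, m / d.1.lcm d.2, 1, 1]) ?_ ?_
  · rintro ⟨a, b⟩ hab
    simp only [Finset.coe_product, Set.mem_prod, Finset.mem_coe, Nat.mem_divisors] at hab
    simp [Nat.mem_finMulAntidiag, Fin.prod_univ_six, hm,
      gcd_mul_div_gcd_mul_div_gcd_mul_div_lcm hab.1.1 hab.2.1]
  · rintro ⟨a, b⟩ - ⟨a', b'⟩ - h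
    have h0 := congrFun h 0
    have h1 := congrFun h 1
    have h2 := congrFun h 2
    simp only [Matrix.cons_val_zero, Matrix.cons_val_one, Matrix.cons_val_two, Matrix.head_cons,
      Matrix.tail_cons] at h0 h1 h2
    refine Prod.ext ?_ ?_
    · calc a = a.gcd b * (a / a.gcd b) := (Nat.mul_div_cancel' (Nat.gcd_dvd_left a b)).symm
        _ = a'.gcd b' * (a' / a'.gcd b') := by rw [h1, h0]
        _ = a' := Nat.mul_div_cancel' (Nat.gcd_dvd_left a' b')
    · calc b = a.gcd b * (b / a.gcd b) := (Nat.mul_div_cancel' (Nat.gcd_dvd_right a b)).symm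
        _ = a'.gcd b' * (b' / a'.gcd b') := by rw [h2, h0]
        _ = b' := Nat.mul_div_cancel' (Nat.gcd_dvd_right a' b')

lemma CuspFormData.rcoef_one (F : CuspFormData) : rcoef F.k F.a 1 = 1 := by
  simp [rcoef, F.a_one]

lemma CuspFormData.norm_rcoef_prime_pow_le (F : CuspFormData) {p : ℕ} (hp : p.Prime) (j : ℕ) :
    ‖rcoef F.k F.a (p ^ j)‖ ≤ j + 1 := by
  have := F.ramanujan (p ^ j) (Nat.one_le_iff_ne_zero.2 (pow_ne_zero _ hp.ne_zero))
  rwa [Nat.divisors_prime_pow hp, Finset.card_map, Finset.card_range, Nat.cast_succ] at this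

/-- estimate (12). For `m` with all prime factors `> 256`, `K(m, ·)` is
analytic in the half-plane `Re s ≥ 1/2` and satisfies `|K(m,s)| ≤ τ₆(m)` there. -/
theorem K_analytic_and_bounded (F : CuspFormData) (m : ℕ) (hm : 0 < m)
    (hp : ∀ p ∈ m.primeFactors, 256 < p) :
    (∀ s : ℂ, 1 / 2 ≤ s.re → AnalyticAt ℂ (fun z => Kfun (rcoef F.k F.a) m z) s) ∧
    (∀ s : ℂ, 1 / 2 ≤ s.re → ‖Kfun (rcoef F.k F.a) m s‖ ≤ (tau6 m : ℝ)) := by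
  set r := rcoef F.k F.a
  have hloc : ∀ p ∈ m.primeFactors, 256 ≤ p ∧ ∀ j : ℕ, ‖r (p ^ j)‖ ≤ j + 1 := fun p hpm =>
    ⟨(hp p hpm).le, F.norm_rcoef_prime_pow_le (Nat.prime_of_mem_primeFactors hpm)⟩
  refine ⟨fun s hs => ?_, fun s hs => ?_⟩
  · rw [funext (Kfun_eq_prod_localFactor r m)]
    exact Finset.analyticAt_fun_prod _ fun p hpm =>
      analyticAt_localFactor (hloc p hpm).1 (hloc p hpm).2 F.rcoef_one _ hs
  · calc ‖Kfun r m s‖ = ∏ p ∈ m.primeFactors, ‖localFactor r p (m.factorization p) s‖ := by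
          rw [Kfun_eq_prod_localFactor, norm_prod]
      _ ≤ ∏ p ∈ m.primeFactors, 2 * ((m.factorization p : ℝ) + 1) :=
          Finset.prod_le_prod (fun _ _ => norm_nonneg _) fun p hpm =>
            norm_localFactor_le (hloc p hpm).1 (hloc p hpm).2 F.rcoef_one _ hs
      _ ≤ tau6 m := by
          exact_mod_cast (prod_two_mul_succ_le_card_divisors_sq hm.ne').trans
            (card_divisors_sq_le_tau6 hm.ne')
end
end
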